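/- Let T = (S, →) be a transition system on subsets of a finite set A in which every state has both a predecessor and a successor. Suppose a nogood δ over time-stamped atoms, whose literals have step indices contained in [i, j] with 1 ≤ i ≤ j, is such that no trajectory (X₀,…,X_{j-i+1}) of length j−i+1 violates the shift of δ by (1−i). Then for every n ≥ 1 and every integer t such that the step indices of the shifted nogood δ↑t lie within [0, n], no trajectory of length n violates δ↑t. -/
import Mathlib


/-- A trajectory of length `n` of the transition system `(Sst, step)`. -/
def IsTraj {A : Type*} (Sst : Set (Set A)) (step : Set A → Set A → Prop)
    (n : ℕ) (X : ℕ → Set A) : Prop :=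
  (∀ k ≤ n, X k ∈ Sst) ∧ ∀ k, 1 ≤ k → k ≤ n → step (X (k - 1)) (X k)

/-- Shift a nogood over (integer) time-stamped atoms by `t`. -/
def shiftNg {A : Type*} [DecidableEq A] (δ : Finset (Bool × (A × ℤ))) (t : ℤ) :
    Finset (Bool × (A × ℤ)) :=
  δ.image fun p => (p.1, (p.2.1, p.2.2 + t))

/-- The trajectory `(X 0, …, X n)` violates the nogood `δ`: all step indices of `δ`
lie in `[0,n]`, every `T (a,k) ∈ δ` has `a ∈ X k`, and every `F (a,k) ∈ δ` has
`a ∉ X k`. -/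
def ViolatesZ {A : Type*} (n : ℕ) (X : ℕ → Set A) (δ : Finset (Bool × (A × ℤ))) : Prop :=
  ∀ p ∈ δ, 0 ≤ p.2.2 ∧ p.2.2 ≤ (n : ℤ) ∧ (p.1 = true ↔ p.2.1 ∈ X p.2.2.toNat)

theorem extendTraj {A : Type*} (Sst : Set (Set A)) (step : Set A → Set A → Prop)
    (hpre : ∀ X ∈ Sst, ∃ Y ∈ Sst, step Y X)
    (hsuc : ∀ X ∈ Sst, ∃ Z ∈ Sst, step X Z)
    (n : ℕ) (X : ℕ → Set A) (hX : IsTraj Sst step n X) :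
    ∃ Z : ℤ → Set A, (∀ k, Z k ∈ Sst) ∧ (∀ k : ℤ, step (Z (k-1)) (Z k)) ∧
      ∀ k : ℤ, 0 ≤ k → k ≤ (n:ℤ) → Z k = X k.toNat := by
  classical
  obtain ⟨hmem, hstep⟩ := hX
  let F : ℕ → {Y // Y ∈ Sst} := fun k => Nat.rec ⟨X n, hmem n le_rfl⟩
    (fun _ Y => ⟨(hsuc Y.1 Y.2).choose, (hsuc Y.1 Y.2).choose_spec.1⟩) k
  have hF : ∀ k, step (F k).1 (F (k+1)).1 := fun k => (hsuc (F k).1 (F k).2).choose_spec.2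
  have hF0 : (F 0).1 = X n := rfl
  let B : ℕ → {Y // Y ∈ Sst} := fun k => Nat.rec ⟨X 0, hmem 0 (Nat.zero_le n)⟩
    (fun _ Y => ⟨(hpre Y.1 Y.2).choose, (hpre Y.1 Y.2).choose_spec.1⟩) k
  have hB : ∀ k, step (B (k+1)).1 (B k).1 := fun k => (hpre (B k).1 (B k).2).choose_spec.2
  have hB0 : (B 0).1 = X 0 := rfl
  refine ⟨fun k => if k < 0 then (B (-k).toNat).1 else if k ≤ (n:ℤ) then X k.toNat
    else (F (k - n).toNat).1, ?_, ?_, ?_⟩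
  · intro k
    by_cases h1 : k < 0
    · simp only [h1, if_true]; exact (B (-k).toNat).2
    · by_cases h2 : k ≤ (n:ℤ)
      · simp only [h1, h2, if_false, if_true]
        exact hmem k.toNat (by omega)
      · simp only [h1, h2, if_false]; exact (F (k - n).toNat).2
  · intro k
    by_cases h1 : k ≤ 0
    · have hk1 : k - 1 < 0 := by omega
      have e1 : (-(k-1)).toNat = (-k).toNat + 1 := by omega
      have e2 : (if k < 0 then (B (-k).toNat).1 else if k ≤ (n:ℤ) then X k.toNat
          else (F (k - n).toNat).1) = (B (-k).toNat).1 := by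
        by_cases h : k < 0
        · simp [h]
        · have hk0 : k = 0 := by omega
          subst hk0
          simp [hB0.symm]
      simp only [hk1, if_true, e1, e2]
      exact hB _
    · by_cases h2 : k ≤ (n:ℤ)
      · have e1 : ¬ (k - 1 < 0) := by omega
        have e2 : k - 1 ≤ (n:ℤ) := by omega
        have e3 : ¬ (k < 0) := by omega
        simp only [e1, e2, e3, h2, if_false, if_true]
        have := hstep k.toNat (by omega) (by omega)
        have e4 : (k-1).toNat = k.toNat - 1 := by omega
        rw [e4]; exact this
      · have e3 : ¬ (k < 0) := by omega
        have e1 : ¬ (k - 1 < 0) := by omega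
        have e5 : ¬ (k ≤ (n:ℤ)) := h2
        have key : (if k - 1 < 0 then (B (-(k-1)).toNat).1 else if k - 1 ≤ (n:ℤ) then X (k-1).toNat
            else (F (k - 1 - n).toNat).1) = (F (k - 1 - n).toNat).1 := by
          by_cases h : k - 1 ≤ (n:ℤ)
          · have hk : k = (n:ℤ) + 1 := by omega
            have e6 : (k - 1 - (n:ℤ)).toNat = 0 := by omega
            have e8 : (k - 1).toNat = n := by omega
            simp only [e1, if_false, h, if_true, e6, hF0, e8]
          · simp [e1, h]
        have e7 : (k - (n:ℤ)).toNat = (k - 1 - n).toNat + 1 := by omega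
        simp only [e3, e5, if_false, key, e7]
        exact hF _
  · intro k hk0 hkn
    have h1 : ¬ k < 0 := by omega
    simp only [h1, hkn, if_false, if_true]

/-- Shifting generalization of entailed nogoods for transition systems in which
every state has both a predecessor and a successor. -/
theorem shift_generalization {A : Type*} [Finite A] [DecidableEq A]
    (Sst : Set (Set A)) (step : Set A → Set A → Prop)
    (hpre : ∀ X ∈ Sst, ∃ Y ∈ Sst, step Y X)
    (hsuc : ∀ X ∈ Sst, ∃ Z ∈ Sst, step X Z)
    (δ : Finset (Bool × (A × ℤ))) (i j : ℤ) (hi : 1 ≤ i) (hij : i ≤ j)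
    (hsteps : ∀ p ∈ δ, i ≤ p.2.2 ∧ p.2.2 ≤ j)
    (hbase : ∀ X : ℕ → Set A, IsTraj Sst step (j - i + 1).toNat X →
      ¬ ViolatesZ (j - i + 1).toNat X (shiftNg δ (1 - i))) :
    ∀ n : ℕ, 1 ≤ n → ∀ t : ℤ,
      (∀ p ∈ δ, 0 ≤ p.2.2 + t ∧ p.2.2 + t ≤ (n : ℤ)) →
      ∀ X : ℕ → Set A, IsTraj Sst step n X → ¬ ViolatesZ n X (shiftNg δ t) := by
  intro n hn t htn X hX hviol
  obtain ⟨Z, hZmem, hZstep, hZeq⟩ := extendTraj Sst step hpre hsuc n X hX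
  set s : ℤ := t + i - 1 with hs
  set m : ℕ := (j - i + 1).toNat with hm
  have hmz : (m : ℤ) = j - i + 1 := by omega
  apply hbase (fun k => Z ((k : ℤ) + s))
  · constructor
    · intro k _; exact hZmem _
    · intro k hk1 _
      have e : ((k - 1 : ℕ) : ℤ) + s = ((k : ℤ) + s) - 1 := by omega
      simpa [e] using hZstep ((k : ℤ) + s)
  · intro p hp
    rw [shiftNg, Finset.mem_image] at hp
    obtain ⟨q, hq, rfl⟩ := hp
    obtain ⟨hq1, hq2⟩ := hsteps q hq
    obtain ⟨ht1, ht2⟩ := htn q hq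
    have hv := hviol (q.1, (q.2.1, q.2.2 + t)) (by
      rw [shiftNg, Finset.mem_image]; exact ⟨q, hq, rfl⟩)
    simp only at hv ⊢
    refine ⟨by omega, by omega, ?_⟩
    have e1 : ((q.2.2 + (1 - i)).toNat : ℤ) + s = q.2.2 + t := by omega
    have e2 : Z (((q.2.2 + (1 - i)).toNat : ℤ) + s) = X (q.2.2 + t).toNat := by
      rw [e1]; exact hZeq _ (by omega) (by omega)
    rw [e2]
    exact hv.2.2
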